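/- Let p be a prime and G a finite abelian p-group. Then rank B(G × C_p) − rank B(G, C_p) = rank B(G), where rank B(G) is the number of subgroups of G, rank B(G × C_p) is the number of subgroups of G × C_p, and rank B(G, C_p) = s(G) + (p−1)·e(G) with s(G) the number of subgroups of G and e(G) the number of pairs (K, N) with N ≤ K ≤ G and [K : N] = p. -/

import Mathlib

open Subgroup

namespace RankBurnside

variable {p : ℕ} [Fact p.Prime] {G : Type*} [CommGroup G] [Finite G]

local notation "Cp" => Multiplicative (ZMod p)

lemma card_Cp : Nat.card Cp = p := by
  rw [Nat.card_congr Multiplicative.toAdd, Nat.card_zmod]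

lemma finite_Cp : Finite Cp := by
  have : NeZero p := ⟨(Fact.out : p.Prime).ne_zero⟩
  exact inferInstanceAs (Finite (ZMod p))

/-- If `(1, c) ∈ H` with `c ≠ 1` then `H` contains all of `⊥ × ⊤`. -/
lemma all_of_one_mem {H : Subgroup (G × Cp)} {c : Cp} (hc : ((1 : G), c) ∈ H)
    (hc1 : c ≠ 1) (c' : Cp) : ((1 : G), c') ∈ H := by
  have htop : zpowers c = ⊤ := zpowers_eq_top_of_prime_card card_Cp hc1
  have : c' ∈ zpowers c := htop ▸ mem_top c'
  obtain ⟨n, rfl⟩ := this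
  have := zpow_mem hc n
  simpa using this

/-- graph of a homomorphism as a subgroup of the product -/
def grf (K : Subgroup G) (φ : K →* Cp) : Subgroup (G × Cp) :=
  (K.subtype.prod φ).range

lemma mem_grf {K : Subgroup G} {φ : K →* Cp} {x : G × Cp} :
    x ∈ grf K φ ↔ ∃ k : K, ((k : G), φ k) = x := Iff.rfl

lemma grf_map_fst (K : Subgroup G) (φ : K →* Cp) :
    (grf K φ).map (MonoidHom.fst G Cp) = K := by
  ext g
  simp only [Subgroup.mem_map, mem_grf]
  constructor
  · rintro ⟨x, ⟨k, rfl⟩, rfl⟩; exact k.2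
  · intro hg; exact ⟨(g, φ ⟨g, hg⟩), ⟨⟨g, hg⟩, rfl⟩, rfl⟩

lemma prodtop_map_fst (K : Subgroup G) :
    (K.prod (⊤ : Subgroup Cp)).map (MonoidHom.fst G Cp) = K := by
  ext g
  simp only [Subgroup.mem_map, Subgroup.mem_prod]
  constructor
  · rintro ⟨x, ⟨h1, _⟩, rfl⟩; exact h1
  · intro hg; exact ⟨(g, 1), ⟨hg, trivial⟩, rfl⟩

def bigF : ((Σ K : Subgroup G, (K →* Cp)) ⊕ Subgroup G) → Subgroup (G × Cp)
  | .inl ⟨K, φ⟩ => grf K φ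
  | .inr K => K.prod ⊤

lemma one_ofAdd_ne : (Multiplicative.ofAdd (1 : ZMod p)) ≠ (1 : Cp) := by
  have : (1 : ZMod p) ≠ 0 := one_ne_zero
  simpa using this

lemma bigF_injective : Function.Injective (bigF (p := p) (G := G)) := by
  rintro (⟨K, φ⟩ | K) (⟨K', φ'⟩ | K') h <;> simp only [bigF] at h
  · have hK : K = K' := by
      rw [← grf_map_fst K φ, ← grf_map_fst K' φ', h]
    subst hK
    have hφ : φ = φ' := by
      ext k
      have : ((k : G), φ k) ∈ grf K φ' := by rw [← h]; exact ⟨k, rfl⟩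
      obtain ⟨k', hk'⟩ := this
      obtain ⟨h1, h2⟩ := Prod.mk.injEq .. ▸ hk'
      have : k' = k := Subtype.ext h1
      rw [← h2, this]
    rw [hφ]
  · exfalso
    have hmem : ((1 : G), Multiplicative.ofAdd (1 : ZMod p)) ∈ K'.prod (⊤ : Subgroup Cp) :=
      ⟨K'.one_mem, trivial⟩
    rw [← h] at hmem
    obtain ⟨k, hk⟩ := hmem
    obtain ⟨h1, h2⟩ := Prod.mk.injEq .. ▸ hk
    have : k = 1 := Subtype.ext h1
    rw [this, map_one] at h2
    exact one_ofAdd_ne h2.symm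
  · exfalso
    have hmem : ((1 : G), Multiplicative.ofAdd (1 : ZMod p)) ∈ K.prod (⊤ : Subgroup Cp) :=
      ⟨K.one_mem, trivial⟩
    rw [h] at hmem
    obtain ⟨k, hk⟩ := hmem
    obtain ⟨h1, h2⟩ := Prod.mk.injEq .. ▸ hk
    have : k = 1 := Subtype.ext h1
    rw [this, map_one] at h2
    exact one_ofAdd_ne h2.symm
  · have : K = K' := by
      rw [← prodtop_map_fst (p := p) K, ← prodtop_map_fst (p := p) K', h]
    rw [this]

lemma bigF_surjective : Function.Surjective (bigF (p := p) (G := G)) := by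
  intro H
  by_cases hP : ∀ c : Cp, ((1 : G), c) ∈ H
  · refine ⟨.inr (H.map (MonoidHom.fst G Cp)), ?_⟩
    show (H.map (MonoidHom.fst G Cp)).prod ⊤ = H
    ext ⟨g, c⟩
    simp only [Subgroup.mem_prod, Subgroup.mem_map, Subgroup.mem_top, and_true]
    constructor
    · rintro ⟨x, hx, rfl⟩
      have hm := H.mul_mem hx (hP (x.2⁻¹ * c))
      have he : x * ((1 : G), x.2⁻¹ * c) = (x.1, c) := Prod.ext (by simp) (by simp)
      rwa [he] at hm
    · intro hg; exact ⟨(g, c), hg, rfl⟩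
  · -- no nontrivial central column
    have hQ : ∀ c : Cp, ((1 : G), c) ∈ H → c = 1 := by
      intro c hc
      by_contra hc1
      exact hP (all_of_one_mem hc hc1)
    have uniq : ∀ (g : G) (c c' : Cp), (g, c) ∈ H → (g, c') ∈ H → c = c' := by
      intro g c c' h1 h2
      have : ((g, c)⁻¹ * (g, c') : G × Cp) ∈ H := H.mul_mem (H.inv_mem h1) h2
      have h3 : ((1 : G), c⁻¹ * c') ∈ H := by simpa using this
      have := hQ _ h3
      rw [inv_mul_eq_one] at this
      exact this
    set K := H.map (MonoidHom.fst G Cp) with hK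
    have hlift : ∀ k : K, ∃ c : Cp, ((k : G), c) ∈ H := by
      rintro ⟨g, hg⟩
      obtain ⟨x, hx, rfl⟩ := Subgroup.mem_map.mp hg
      exact ⟨x.2, hx⟩
    let φf : K → Cp := fun k => Classical.choose (hlift k)
    have φspec : ∀ k : K, ((k : G), φf k) ∈ H := fun k => Classical.choose_spec (hlift k)
    let φ : K →* Cp :=
      { toFun := φf
        map_one' := by
          have h1 : ((1 : G), (1 : Cp)) ∈ H := H.one_mem
          exact uniq 1 (φf 1) 1 (by simpa using φspec 1) h1
        map_mul' := by
          intro a b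
          have hab := φspec (a * b)
          have h2 : (((a : G) * b), φf a * φf b) ∈ H := by
            have := H.mul_mem (φspec a) (φspec b)
            simpa using this
          exact uniq _ _ _ (by simpa using hab) h2 }
    refine ⟨.inl ⟨K, φ⟩, ?_⟩
    show grf K φ = H
    ext ⟨g, c⟩
    rw [mem_grf]
    constructor
    · rintro ⟨k, hk⟩; rw [← hk]; exact φspec k
    · intro hgc
      have hg : g ∈ K := ⟨(g, c), hgc, rfl⟩
      exact ⟨⟨g, hg⟩, by rw [uniq g (φ ⟨g, hg⟩) c (φspec ⟨g, hg⟩) hgc]⟩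

end RankBurnside

namespace RankBurnside

variable {p : ℕ} [Fact p.Prime] {G : Type*} [CommGroup G] [Finite G]

local notation "Cp" => Multiplicative (ZMod p)

instance (K : Subgroup G) : Finite (K →* Cp) := by
  have := finite_Cp (p := p)
  exact Finite.of_injective (fun f => (f : K → Cp)) DFunLike.coe_injective

/-- scaling automorphism-ish hom on `Cp` -/
def psi (u : ZMod p) : Cp →* Cp where
  toFun c := Multiplicative.ofAdd (u * c.toAdd)
  map_one' := by simp
  map_mul' x y := by
    simp only [toAdd_mul, mul_add, ofAdd_add]

lemma psi_apply (u : ZMod p) (c : Cp) : psi u c = Multiplicative.ofAdd (u * c.toAdd) := rfl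

lemma exists_phi0 (K : Subgroup G) (N' : Subgroup K) (h : N'.index = p) :
    ∃ φ : K →* Cp, Function.Surjective φ ∧ φ.ker = N' := by
  have hcard : Nat.card (K ⧸ N') = p := by rw [← Subgroup.index_eq_card]; exact h
  haveI : IsCyclic (K ⧸ N') := isCyclic_of_prime_card hcard
  haveI : IsCyclic Cp := isCyclic_of_prime_card (card_Cp (p := p))
  let iso : (K ⧸ N') ≃* Cp := mulEquivOfCyclicCardEq (by rw [hcard, card_Cp])
  refine ⟨iso.toMonoidHom.comp (QuotientGroup.mk' N'), ?_, ?_⟩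
  · exact iso.surjective.comp (QuotientGroup.mk'_surjective N')
  · ext x
    simp only [MonoidHom.mem_ker, MonoidHom.comp_apply, MulEquiv.coe_toMonoidHom,
      QuotientGroup.mk'_apply]
    rw [show (1 : Cp) = iso 1 by simp, iso.injective.eq_iff, QuotientGroup.eq_one_iff]

/-- pairs `(K, N)` with `N ≤ K` of relative index `p` -/
abbrev PairsT (p : ℕ) (G : Type*) [CommGroup G] :=
  {KN : Subgroup G × Subgroup G // KN.2 ≤ KN.1 ∧ KN.2.relIndex KN.1 = p}

noncomputable def phi0 (x : PairsT p G) : x.1.1 →* Cp :=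
  (exists_phi0 x.1.1 (x.1.2.subgroupOf x.1.1) x.2.2).choose

lemma phi0_surj (x : PairsT p G) : Function.Surjective (phi0 x) :=
  (exists_phi0 x.1.1 (x.1.2.subgroupOf x.1.1) x.2.2).choose_spec.1

lemma phi0_ker (x : PairsT p G) : (phi0 x).ker = x.1.2.subgroupOf x.1.1 :=
  (exists_phi0 x.1.1 (x.1.2.subgroupOf x.1.1) x.2.2).choose_spec.2

lemma psi_comp_ker (u : (ZMod p)ˣ) {K : Subgroup G} (f : K →* Cp) :
    ((psi (u : ZMod p)).comp f).ker = f.ker := by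
  ext k
  simp only [MonoidHom.mem_ker, MonoidHom.comp_apply, psi_apply]
  constructor
  · intro h
    have h2 : (u : ZMod p) * (f k).toAdd = 0 := by
      have := congrArg Multiplicative.toAdd h
      simpa using this
    have h3 : (f k).toAdd = 0 := by
      have := mul_eq_zero.mp h2
      rcases this with h | h
      · exact absurd h u.ne_zero
      · exact h
    have : f k = Multiplicative.ofAdd (0 : ZMod p) := by
      rw [← h3]; rfl
    simpa using this
  · intro h; rw [h]; simp

lemma comp_psi_ne_one (x : PairsT p G) (u : (ZMod p)ˣ) :
    (psi (u : ZMod p)).comp (phi0 x) ≠ 1 := by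
  intro h1
  have hk : (phi0 x).ker = ⊤ := by
    rw [← psi_comp_ker u (phi0 x), h1, MonoidHom.ker_one]
  have : (x.1.2.subgroupOf x.1.1).index = p := x.2.2
  rw [← phi0_ker x, hk, Subgroup.index_top] at this
  exact (Fact.out : p.Prime).one_lt.ne this

noncomputable def PhiFun : PairsT p G × (ZMod p)ˣ → Σ K : Subgroup G, {φ : K →* Cp // φ ≠ 1} :=
  fun xu => ⟨xu.1.1.1, ⟨(psi (xu.2 : ZMod p)).comp (phi0 xu.1), comp_psi_ne_one xu.1 xu.2⟩⟩

lemma phiFun_recover (xu : PairsT p G × (ZMod p)ˣ) :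
    ((PhiFun xu).2.1.ker).map (PhiFun xu).1.subtype = xu.1.1.2 := by
  show (((psi (xu.2 : ZMod p)).comp (phi0 xu.1)).ker).map xu.1.1.1.subtype = xu.1.1.2
  rw [psi_comp_ker, phi0_ker, subgroupOf_map_subtype, inf_eq_left.mpr xu.1.2.1]

lemma phiFun_injective : Function.Injective (PhiFun (p := p) (G := G)) := by
  rintro ⟨x, u⟩ ⟨y, v⟩ h
  have hKfst : x.1.1 = y.1.1 := congrArg Sigma.fst h
  have hsnd : x.1.2 = y.1.2 := by
    rw [← phiFun_recover (⟨x, u⟩ : PairsT p G × (ZMod p)ˣ),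
      ← phiFun_recover (⟨y, v⟩ : PairsT p G × (ZMod p)ˣ), h]
  have hxy : x = y := Subtype.ext (Prod.ext hKfst hsnd)
  subst hxy
  have h2 : ((psi (u : ZMod p)).comp (phi0 x)) = ((psi (v : ZMod p)).comp (phi0 x)) := by
    have := (Sigma.mk.inj_iff.mp h).2
    exact Subtype.ext_iff.mp (eq_of_heq this)
  obtain ⟨k₀, hk₀⟩ := phi0_surj x (Multiplicative.ofAdd (1 : ZMod p))
  have h3 := congrArg (fun f : x.1.1 →* Cp => f k₀) h2
  simp only [MonoidHom.comp_apply, hk₀, psi_apply] at h3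
  have h4 : (u : ZMod p) = (v : ZMod p) := by
    have := congrArg Multiplicative.toAdd h3
    simpa using this
  rw [show u = v from Units.ext h4]

lemma phiFun_surjective : Function.Surjective (PhiFun (p := p) (G := G)) := by
  rintro ⟨K, φ, hφ⟩
  -- range is everything
  have hrange : φ.range = ⊤ := by
    have : ∃ k, φ k ≠ 1 := by
      by_contra hcon
      push_neg at hcon
      exact hφ (MonoidHom.ext fun k => hcon k)
    obtain ⟨k, hk⟩ := this
    have htop : zpowers (φ k) = ⊤ := zpowers_eq_top_of_prime_card card_Cp hk
    rw [eq_top_iff, ← htop]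
    rintro c ⟨n, rfl⟩
    exact ⟨k ^ n, by simp⟩
  have hker : φ.ker.index = p := by
    rw [Subgroup.index_ker, hrange, Nat.card_congr Subgroup.topEquiv.toEquiv, card_Cp]
  set N : Subgroup G := φ.ker.map K.subtype with hN
  have hle : N ≤ K := map_subtype_le _
  have hsub : N.subgroupOf K = φ.ker := by
    rw [hN, ← comap_subtype, comap_map_eq_self_of_injective K.subtype_injective]
  have hrel : N.relIndex K = p := by
    rw [Subgroup.relIndex, hsub, hker]
  set x : PairsT p G := ⟨(K, N), hle, hrel⟩ with hx
  have hker0 : (phi0 x).ker = φ.ker := by rw [phi0_ker x, hsub]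
  obtain ⟨k₀, hk₀⟩ := phi0_surj x (Multiplicative.ofAdd (1 : ZMod p))
  have hu0 : (φ k₀).toAdd ≠ 0 := by
    intro h0
    have : φ k₀ = 1 := by
      have : φ k₀ = Multiplicative.ofAdd (0 : ZMod p) := by rw [← h0]; rfl
      simpa using this
    have hkmem : k₀ ∈ (phi0 x).ker := hker0 ▸ this
    rw [MonoidHom.mem_ker, hk₀] at hkmem
    exact one_ofAdd_ne hkmem
  refine ⟨(x, Units.mk0 _ hu0), ?_⟩
  have hcomp : (psi ((Units.mk0 _ hu0 : (ZMod p)ˣ) : ZMod p)).comp (phi0 x) = φ := by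
    ext k
    set m : ZMod p := (phi0 x k).toAdd with hm
    have hNeZero : NeZero p := ⟨(Fact.out : p.Prime).ne_zero⟩
    have hp0 : phi0 x (k₀ ^ m.val) = Multiplicative.ofAdd m := by
      rw [map_pow, hk₀, ← ofAdd_nsmul, nsmul_eq_mul, mul_one, ZMod.natCast_rightInverse m]
    have hmem : k * (k₀ ^ m.val)⁻¹ ∈ (phi0 x).ker := by
      rw [MonoidHom.mem_ker, map_mul, map_inv, hp0]
      show Multiplicative.ofAdd m * (Multiplicative.ofAdd m)⁻¹ = 1
      simp
    rw [hker0, MonoidHom.mem_ker, map_mul, map_inv, mul_inv_eq_one] at hmem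
    have hφk : φ k = Multiplicative.ofAdd ((φ k₀).toAdd * m) := by
      rw [hmem, map_pow]
      rw [show φ k₀ = Multiplicative.ofAdd (φ k₀).toAdd from rfl]
      rw [← ofAdd_nsmul, nsmul_eq_mul, ZMod.natCast_rightInverse m, mul_comm]
      simp
    rw [MonoidHom.comp_apply, psi_apply, ← hm, hφk]
    rfl
  show (⟨K, ⟨(psi ((Units.mk0 _ hu0 : (ZMod p)ˣ) : ZMod p)).comp (phi0 x), _⟩⟩ :
      Σ K : Subgroup G, {φ : K →* Cp // φ ≠ 1}) = ⟨K, ⟨φ, hφ⟩⟩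
  exact congrArg (fun ψ : {f : K →* Cp // f ≠ 1} =>
    (⟨K, ψ⟩ : Σ K : Subgroup G, {φ : K →* Cp // φ ≠ 1})) (Subtype.ext hcomp)

end RankBurnside

namespace RankBurnside

variable {p : ℕ} [Fact p.Prime] {G : Type*} [CommGroup G] [Finite G]

local notation "Cp" => Multiplicative (ZMod p)

lemma card_sigma_ne : Nat.card (Σ K : Subgroup G, {φ : K →* Cp // ¬ φ = 1}) =
    (p - 1) * Nat.card (PairsT p G) := by
  rw [← Nat.card_congr (Equiv.ofBijective PhiFun ⟨phiFun_injective, phiFun_surjective⟩),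
    Nat.card_prod, Nat.card_eq_fintype_card (α := (ZMod p)ˣ), ZMod.card_units, mul_comm]

lemma card_sigma_hom : Nat.card (Σ K : Subgroup G, (K →* Cp)) =
    Nat.card (Subgroup G) + (p - 1) * Nat.card (PairsT p G) := by
  classical
  have e1 : (Σ K : Subgroup G, (K →* Cp)) ≃
      ((Σ K : Subgroup G, {φ : K →* Cp // φ = 1}) ⊕
        (Σ K : Subgroup G, {φ : K →* Cp // ¬ φ = 1})) :=
    (Equiv.sigmaCongrRight fun K : Subgroup G =>
      (Equiv.sumCompl (fun φ : K →* Cp => φ = 1)).symm).trans (Equiv.sigmaSumDistrib _ _)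
  rw [Nat.card_congr e1, Nat.card_sum]
  congr 1
  · haveI : ∀ K : Subgroup G, Unique {φ : K →* Cp // φ = 1} := fun K =>
      ⟨⟨⟨1, rfl⟩⟩, fun x => Subtype.ext x.2⟩
    exact Nat.card_congr ((Equiv.sigmaCongrRight fun K =>
      Equiv.equivPUnit.{_, 1} _).trans (Equiv.sigmaPUnit _))
  · exact card_sigma_ne

end RankBurnside

open RankBurnside in
/-- `rank B(G × C_p) − rank B(G, C_p) = rank B(G)` for a finite abelian `p`-group `G`:
the number of subgroups of `G × C_p`, minus `s(G) + (p−1)·e(G)` (the rank of the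
relative Burnside module), equals the number `s(G)` of subgroups of `G`. Here `e(G)`
is the number of pairs `(K, N)` with `N ≤ K ≤ G` of index `p`. -/
theorem rank_burnside_difference (p : ℕ) [Fact p.Prime] (G : Type*) [CommGroup G]
    [Finite G] (hG : IsPGroup p G) :
    Nat.card (Subgroup (G × Multiplicative (ZMod p))) -
        (Nat.card (Subgroup G) +
          (p - 1) * Nat.card {KN : Subgroup G × Subgroup G //
            KN.2 ≤ KN.1 ∧ KN.2.relIndex KN.1 = p}) =
      Nat.card (Subgroup G) := by
  have hcard : Nat.card (Subgroup (G × Multiplicative (ZMod p))) =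
      (Nat.card (Subgroup G) + (p - 1) * Nat.card (PairsT p G)) + Nat.card (Subgroup G) := by
    rw [Nat.card_congr (Equiv.ofBijective (bigF (p := p) (G := G)) ⟨bigF_injective, bigF_surjective⟩).symm,
      Nat.card_sum, card_sigma_hom]
  have hPT : Nat.card (PairsT p G) = Nat.card {KN : Subgroup G × Subgroup G //
      KN.2 ≤ KN.1 ∧ KN.2.relIndex KN.1 = p} := rfl
  rw [hcard, hPT]
  generalize Nat.card (Subgroup G) = s
  generalize (p - 1) * Nat.card {KN : Subgroup G × Subgroup G //
      KN.2 ≤ KN.1 ∧ KN.2.relIndex KN.1 = p} = t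
  omega
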